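/- Let β ∈ (0,1/2], o = (0,0,…,1,0) ∈ S^N ⊂ R^{N+1}, and define σ̃(θ) = arccos^β( (∏_{i=1}^{N−1} sin θ_i) cos θ_N ) for θ ∈ Θ = [0,π]^{N−1} × [0,2π). Let θ₀ = (π/2,…,π/2,π) ∈ Θ. Then σ̃(θ) = π^β − β π^{β−1} ‖θ − θ₀‖ (1 + o(1)) as ‖θ − θ₀‖ → 0. -/

import Mathlib

/-!
Put `x = θ - θ₀`. Since `θ₀` has coordinates `π/2` except the last one, which is `π`, the
coordinate `x_N` of the point is `-∏ᵢ cos xᵢ`, so `σ̃(θ) = (π - a)^β` with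
`a = arccos ∏ᵢ cos xᵢ`. From `2(1 - cos t) = t² + O(t⁴)` and the product bounds
`1 - s ≤ ∏ᵢ (1 - aᵢ) ≤ 1 - s + s²` (`aᵢ ∈ [0, 1]`, `s = ∑ᵢ aᵢ`) one gets
`2(1 - ∏ᵢ cos xᵢ) = ‖x‖² + O(‖x‖⁴)`, hence `a ~ ‖x‖`; and `π^β - (π - a)^β ~ β π^{β-1} a`
because `t ↦ t^β` is differentiable at `π` with nonzero derivative.
-/

open Filter Set Real Topology

namespace Finset

variable {ι : Type*} (s : Finset ι) {a : ι → ℝ}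

theorem one_sub_sum_le_prod_one_sub (h0 : ∀ i ∈ s, 0 ≤ a i) (h1 : ∀ i ∈ s, a i ≤ 1) :
    1 - ∑ i ∈ s, a i ≤ ∏ i ∈ s, (1 - a i) := by
  induction s using Finset.cons_induction with
  | empty => simp
  | cons j s hj ih =>
    simp only [forall_mem_cons] at h0 h1
    have hS : 0 ≤ ∑ i ∈ s, a i := sum_nonneg h0.2
    rw [prod_cons, sum_cons]
    nlinarith [ih h0.2 h1.2]

theorem prod_one_sub_le_one_sub_sum_add_sq (h0 : ∀ i ∈ s, 0 ≤ a i) (h1 : ∀ i ∈ s, a i ≤ 1) :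
    ∏ i ∈ s, (1 - a i) ≤ 1 - ∑ i ∈ s, a i + (∑ i ∈ s, a i) ^ 2 := by
  induction s using Finset.cons_induction with
  | empty => simp
  | cons j s hj ih =>
    simp only [forall_mem_cons] at h0 h1
    have hS : 0 ≤ ∑ i ∈ s, a i := sum_nonneg h0.2
    rw [prod_cons, sum_cons]
    nlinarith [ih h0.2 h1.2]

end Finset

theorem tendsto_div_nhds_one_of_abs_sub_le_sq {α : Type*} {l : Filter α} {f g : α → ℝ}
    (hg : Tendsto g l (𝓝 0)) (hg0 : ∀ᶠ x in l, g x ≠ 0)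
    (hfg : ∀ᶠ x in l, |f x - g x| ≤ g x ^ 2) :
    Tendsto (fun x => f x / g x) l (𝓝 1) := by
  rw [tendsto_iff_norm_sub_tendsto_zero]
  refine squeeze_zero' (Eventually.of_forall fun _ => norm_nonneg _) ?_ (by simpa using hg.abs)
  filter_upwards [hg0, hfg] with x hx hfgx
  rw [Real.norm_eq_abs, div_sub_one hx, abs_div, div_le_iff₀ (abs_pos.2 hx), ← sq, sq_abs]
  exact hfgx

namespace Real

theorem abs_two_mul_one_sub_cos_sub_sq_le {x : ℝ} (hx : |x| ≤ 1) :
    |2 * (1 - cos x) - x ^ 2| ≤ x ^ 4 / 4 := by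
  have h := cos_bound hx
  rw [show |x| ^ 4 = x ^ 4 by rw [← abs_pow, abs_of_nonneg (by positivity)]] at h
  rw [abs_le] at h ⊢
  constructor <;> nlinarith [pow_two_nonneg (x ^ 2)]

theorem tendsto_sq_div_two_mul_one_sub_cos :
    Tendsto (fun t => t ^ 2 / (2 * (1 - cos t))) (𝓝[≠] 0) (𝓝 1) := by
  have hsq : Tendsto (fun t : ℝ => t ^ 2) (𝓝[≠] 0) (𝓝 0) := by
    simpa using ((continuous_pow 2).tendsto (0 : ℝ)).mono_left nhdsWithin_le_nhds
  have hsmall : ∀ᶠ t : ℝ in 𝓝[≠] 0, |t| ≤ 1 :=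
    (eventually_abs_sub_lt 0 one_pos).mono (fun t ht => by simpa using ht.le) |>.filter_mono
      nhdsWithin_le_nhds
  have h := tendsto_div_nhds_one_of_abs_sub_le_sq hsq
    (eventually_mem_nhdsWithin.mono fun t ht => pow_ne_zero 2 ht)
    (hsmall.mono fun t ht => (abs_two_mul_one_sub_cos_sub_sq_le ht).trans (by nlinarith))
  simpa using h.inv₀ one_ne_zero

end Real

section EuclideanSpace

variable {ι : Type*} [Fintype ι]

theorem abs_two_mul_one_sub_prod_cos_sub_norm_sq_le {x : EuclideanSpace ℝ ι} (hx : ‖x‖ ≤ 1) :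
    |2 * (1 - ∏ i, cos (x i)) - ‖x‖ ^ 2| ≤ ‖x‖ ^ 4 := by
  have hxi (i : ι) : |x i| ≤ ‖x‖ := by simpa using PiLp.norm_apply_le x i
  have hnorm : ‖x‖ ^ 2 = ∑ i, x i ^ 2 := by simp [EuclideanSpace.norm_sq_eq]
  set S := ∑ i, (1 - cos (x i)) with hS
  have hS0 : 0 ≤ S := Finset.sum_nonneg fun i _ => sub_nonneg.2 (cos_le_one _)
  have hSle : 2 * S ≤ ‖x‖ ^ 2 := by
    rw [hnorm, hS, Finset.mul_sum]
    exact Finset.sum_le_sum fun i _ => by linarith [one_sub_sq_div_two_le_cos (x := x i)]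
  have hSge : ‖x‖ ^ 2 - ‖x‖ ^ 4 / 4 ≤ 2 * S := by
    have hterm (i : ι) : x i ^ 2 - ‖x‖ ^ 2 / 4 * x i ^ 2 ≤ 2 * (1 - cos (x i)) := by
      have hi := (abs_le.1 (abs_two_mul_one_sub_cos_sub_sq_le ((hxi i).trans hx))).1
      have hsq : x i ^ 2 ≤ ‖x‖ ^ 2 := by simpa using pow_le_pow_left₀ (abs_nonneg _) (hxi i) 2
      nlinarith [sq_nonneg (x i)]
    have := Finset.sum_le_sum fun i (_ : i ∈ Finset.univ) => hterm i
    rw [Finset.sum_sub_distrib, ← Finset.mul_sum, ← hnorm, ← Finset.mul_sum] at this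
    linarith
  have hcos (i : ι) : 0 ≤ cos (x i) := by
    have := abs_le.1 ((hxi i).trans hx)
    exact cos_nonneg_of_neg_pi_div_two_le_of_le (by linarith [pi_gt_three])
      (by linarith [pi_gt_three])
  have h0 (i : ι) (_ : i ∈ Finset.univ) : 0 ≤ 1 - cos (x i) := sub_nonneg.2 (cos_le_one _)
  have h1 (i : ι) (_ : i ∈ Finset.univ) : 1 - cos (x i) ≤ 1 := by linarith [hcos i]
  have hlow := Finset.one_sub_sum_le_prod_one_sub _ h0 h1
  have hupp := Finset.prod_one_sub_le_one_sub_sum_add_sq _ h0 h1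
  simp only [sub_sub_cancel] at hlow hupp
  rw [abs_le]
  constructor <;> nlinarith [sq_nonneg ‖x‖]

theorem eventually_abs_two_mul_one_sub_prod_cos_sub_norm_sq_le :
    ∀ᶠ x : EuclideanSpace ℝ ι in 𝓝 0, |2 * (1 - ∏ i, cos (x i)) - ‖x‖ ^ 2| ≤ (‖x‖ ^ 2) ^ 2 := by
  filter_upwards [Metric.closedBall_mem_nhds (0 : EuclideanSpace ℝ ι) one_pos] with x hx
  rw [← pow_mul]
  exact abs_two_mul_one_sub_prod_cos_sub_norm_sq_le (by simpa using hx)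

theorem tendsto_two_mul_one_sub_prod_cos_div_norm_sq :
    Tendsto (fun x : EuclideanSpace ℝ ι => 2 * (1 - ∏ i, cos (x i)) / ‖x‖ ^ 2) (𝓝[≠] 0)
      (𝓝 1) := by
  refine tendsto_div_nhds_one_of_abs_sub_le_sq ?_ ?_
    (eventually_abs_two_mul_one_sub_prod_cos_sub_norm_sq_le.filter_mono nhdsWithin_le_nhds)
  · exact ((continuous_norm.pow 2).tendsto' 0 0 (by simp)).mono_left nhdsWithin_le_nhds
  · exact eventually_mem_nhdsWithin.mono fun x hx => by simpa using hx

theorem eventually_prod_cos_lt_one :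
    ∀ᶠ x : EuclideanSpace ℝ ι in 𝓝[≠] 0, ∏ i, cos (x i) < 1 := by
  filter_upwards [eventually_abs_two_mul_one_sub_prod_cos_sub_norm_sq_le.filter_mono
    nhdsWithin_le_nhds, nhdsWithin_le_nhds (Metric.ball_mem_nhds 0 one_pos),
    self_mem_nhdsWithin] with x hbound hx hne
  have hr : 0 < ‖x‖ ^ 2 := pow_pos (norm_pos_iff.2 hne) 2
  have hr1 : ‖x‖ ^ 2 < 1 := by simpa using hx
  have hpos : 0 < ‖x‖ ^ 2 - (‖x‖ ^ 2) ^ 2 := by nlinarith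
  linarith [(abs_le.1 hbound).1]

theorem tendsto_arccos_prod_cos_nhdsNE :
    Tendsto (fun x : EuclideanSpace ℝ ι => arccos (∏ i, cos (x i))) (𝓝[≠] 0) (𝓝[≠] 0) := by
  refine tendsto_nhdsWithin_of_tendsto_nhds_of_eventually_within _ ?_ ?_
  · refine (Continuous.tendsto' ?_ 0 0 (by simp)).mono_left nhdsWithin_le_nhds
    fun_prop
  · exact eventually_prod_cos_lt_one.mono fun x hx => (arccos_pos.2 hx).ne'

theorem tendsto_arccos_prod_cos_div_norm :
    Tendsto (fun x : EuclideanSpace ℝ ι => arccos (∏ i, cos (x i)) / ‖x‖) (𝓝[≠] 0)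
      (𝓝 1) := by
  have hsq : Tendsto (fun x : EuclideanSpace ℝ ι => (arccos (∏ i, cos (x i)) / ‖x‖) ^ 2)
      (𝓝[≠] 0) (𝓝 1) := by
    have h := (tendsto_sq_div_two_mul_one_sub_cos.comp tendsto_arccos_prod_cos_nhdsNE).mul
      (tendsto_two_mul_one_sub_prod_cos_div_norm_sq (ι := ι))
    rw [mul_one] at h
    refine h.congr' (eventually_prod_cos_lt_one.mono fun x hx => ?_)
    have hQ : -1 ≤ ∏ i, cos (x i) := by
      refine neg_le_of_abs_le ?_
      rw [Finset.abs_prod]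
      exact Finset.prod_le_one (fun _ _ => abs_nonneg _) fun i _ => abs_cos_le_one _
    have h1Q : 2 * (1 - ∏ i, cos (x i)) ≠ 0 := by linarith
    dsimp only [Function.comp_apply]
    rw [cos_arccos hQ hx.le, div_pow, div_mul_div_comm,
      mul_comm (arccos _ ^ 2), mul_div_mul_left _ _ h1Q]
  have h := (continuous_sqrt.tendsto 1).comp hsq
  rw [sqrt_one] at h
  exact h.congr fun x => sqrt_sq (div_nonneg (arccos_nonneg _) (norm_nonneg _))

end EuclideanSpace

theorem HasDerivAt.tendsto_sub_sub_div_mul {f : ℝ → ℝ} {f' x₀ : ℝ} (hf : HasDerivAt f f' x₀)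
    (hf' : f' ≠ 0) : Tendsto (fun h => (f x₀ - f (x₀ - h)) / (f' * h)) (𝓝[≠] 0) (𝓝 1) := by
  have hneg : Tendsto (fun h : ℝ => -h) (𝓝[≠] 0) (𝓝[≠] 0) := by
    refine tendsto_nhdsWithin_of_tendsto_nhds_of_eventually_within _ ?_ ?_
    · simpa using (tendsto_neg (0 : ℝ)).mono_left nhdsWithin_le_nhds
    · exact eventually_mem_nhdsWithin.mono fun h hh => by simpa using hh
  have h := (hf.tendsto_slope_zero.comp hneg).div_const f'
  rw [div_self hf'] at h
  refine h.congr' (eventually_mem_nhdsWithin.mono fun h hh => ?_)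
  simp only [Function.comp_apply, smul_eq_mul, ← sub_eq_add_neg]
  field_simp [show h ≠ 0 from hh]
  ring

theorem HasDerivAt.tendsto_sub_sub_comp_div_mul {α : Type*} {l : Filter α} {f : ℝ → ℝ}
    {f' x₀ : ℝ} (hf : HasDerivAt f f' x₀) (hf' : f' ≠ 0) {a r : α → ℝ}
    (ha : Tendsto a l (𝓝[≠] 0)) (har : Tendsto (fun x => a x / r x) l (𝓝 1)) :
    Tendsto (fun x => (f x₀ - f (x₀ - a x)) / (f' * r x)) l (𝓝 1) := by
  have h := ((hf.tendsto_sub_sub_div_mul hf').comp ha).mul har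
  rw [mul_one] at h
  refine h.congr' ((tendsto_nhdsWithin_iff.1 ha).2.mono fun x hx => ?_)
  rw [Function.comp_apply, div_mul_div_comm, mul_right_comm f', mul_div_mul_right _ _ hx]

theorem prod_sin_mul_cos_eq_neg_prod_cos_sub {N : ℕ} (hN : 1 ≤ N)
    (θ θ0 : EuclideanSpace ℝ (Fin N))
    (hθ0 : ∀ i : Fin N, θ0 i = if (i : ℕ) = N - 1 then π else π / 2) :
    (∏ i : Fin N, if (i : ℕ) < N - 1 then sin (θ i) else 1) *
        cos (θ ⟨N - 1, Nat.sub_one_lt_of_lt hN⟩) = -∏ i, cos ((θ - θ0) i) := by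
  obtain ⟨n, rfl⟩ : ∃ n, N = n + 1 := ⟨N - 1, by omega⟩
  simp [Fin.prod_univ_castSucc, hθ0, Fin.last, cos_sub_pi, Fin.val_castSucc, Nat.ne_of_lt,
    cos_sub_pi_div_two]

/-- Lemma `lemA`, first part.  Under spherical coordinates
`x_N = (∏_{i=1}^{N-1} sin θᵢ) cos θ_N` and with the starting point `o = (0,…,1,0)`, the
standard deviation `σ̃(θ) = arccos^β((∏_{i=1}^{N-1} sin θᵢ) cos θ_N)` of the SFBM satisfies
`σ̃(θ) = π^β − β π^{β−1} ‖θ − θ₀‖ (1 + o(1))` as `‖θ − θ₀‖ → 0` within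
`Θ = [0,π]^{N-1} × [0,2π)`, where `θ₀ = (π/2, …, π/2, π)`. -/
theorem sfbm_sd_expansion_sphere
    (N : ℕ) (hN : 1 ≤ N) (β : ℝ) (hβ : β ∈ Set.Ioc (0:ℝ) (1/2))
    (σ : EuclideanSpace ℝ (Fin N) → ℝ)
    (hσ : ∀ θ, σ θ = Real.arccos
      ((∏ i : Fin N, if (i : ℕ) < N - 1 then Real.sin (θ i) else 1) *
        Real.cos (θ (⟨N - 1, by omega⟩ : Fin N))) ^ β)
    (θ0 : EuclideanSpace ℝ (Fin N))
    (hθ0 : ∀ i : Fin N, θ0 i = if (i : ℕ) = N - 1 then Real.pi else Real.pi / 2)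
    (Θ : Set (EuclideanSpace ℝ (Fin N))) :
    ∀ ε > (0:ℝ), ∃ δ > (0:ℝ), ∀ θ ∈ Θ, θ ≠ θ0 → ‖θ - θ0‖ < δ →
      |(Real.pi ^ β - σ θ) / (β * Real.pi ^ (β - 1) * ‖θ - θ0‖) - 1| ≤ ε := by
  have hσ' (θ : EuclideanSpace ℝ (Fin N)) :
      σ θ = (π - arccos (∏ i, cos ((θ - θ0) i))) ^ β := by
    rw [hσ, prod_sin_mul_cos_eq_neg_prod_cos_sub hN θ θ0 hθ0, arccos_neg]
  have hderiv : HasDerivAt (fun t => t ^ β) (β * π ^ (β - 1)) π :=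
    hasDerivAt_rpow_const (Or.inl pi_ne_zero)
  have hlim := hderiv.tendsto_sub_sub_comp_div_mul (mul_pos hβ.1 (rpow_pos_of_pos pi_pos _)).ne'
    (tendsto_arccos_prod_cos_nhdsNE (ι := Fin N)) tendsto_arccos_prod_cos_div_norm
  intro ε hε
  obtain ⟨δ, hδ, H⟩ := Metric.tendsto_nhdsWithin_nhds.1 hlim ε hε
  refine ⟨δ, hδ, fun θ _ hne hθ => ?_⟩
  have hθ' := H (x := θ - θ0) (sub_ne_zero.2 hne) (by simpa using hθ)
  rw [Real.dist_eq] at hθ'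
  rw [hσ']
  exact hθ'.le
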